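/- arXiv:2205.12168 — 2 statements merged into one kernel-verified Lean document; each statement's English description precedes it below -/
import Mathlib

section
/- The function R_off(λ) = (w·c_m + λ)/(w·c_m + (c_o/(p_max + η·c_g))·λ) satisfies R_off(λ) < (p_max + η·c_g)/c_o for all λ ≥ 0, and R_off(λ) tends to (p_max + η·c_g)/c_o as λ → ∞. -/
/-!
With `a = w c_m > 0` and `k = c_o / (p_max + η c_g) ∈ (0, 1)`, `R_off(λ) = (a + λ) / (a + k λ)`.
The bound is `k (a + λ) = k a + k λ < a + k λ`, and dividing numerator and denominator by `λ`
gives the limit `1 / k`.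
-/

open Filter Topology

section RatioOfAffineMaps

variable {a k x : ℝ}

theorem add_div_add_mul_lt_inv (ha : 0 < a) (hk₀ : 0 < k) (hk₁ : k < 1) (hx : 0 ≤ x) :
    (a + x) / (a + k * x) < k⁻¹ := by
  rw [div_lt_iff₀ (by positivity), inv_mul_eq_div, lt_div_iff₀ hk₀]
  nlinarith

theorem tendsto_add_div_add_mul_atTop (a : ℝ) (hk : k ≠ 0) :
    Tendsto (fun x : ℝ => (a + x) / (a + k * x)) atTop (𝓝 k⁻¹) := by
  have h_small : Tendsto (fun x : ℝ => a * x⁻¹) atTop (𝓝 0) := by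
    simpa using tendsto_inv_atTop_zero.const_mul a
  have h_quot : Tendsto (fun x : ℝ => (a * x⁻¹ + 1) / (a * x⁻¹ + k)) atTop (𝓝 ((0 + 1) / (0 + k))) :=
    (h_small.add_const 1).div (h_small.add_const k) (by simpa using hk)
  rw [zero_add, zero_add, one_div] at h_quot
  refine h_quot.congr' ?_
  filter_upwards [eventually_gt_atTop 0] with x hx
  field_simp

end RatioOfAffineMaps

theorem Roff_bound_and_limit_general (w c_m c_o c_g η p_max : ℝ)
    (hw : 0 < w) (hcm : 0 < c_m) (hco : 0 < c_o)
    (hlt : c_o < p_max + η * c_g) :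
    (∀ lam : ℝ, 0 ≤ lam →
      (w * c_m + lam) / (w * c_m + (c_o / (p_max + η * c_g)) * lam)
        < (p_max + η * c_g) / c_o) ∧
    Filter.Tendsto
      (fun lam : ℝ =>
        (w * c_m + lam) / (w * c_m + (c_o / (p_max + η * c_g)) * lam))
      Filter.atTop (nhds ((p_max + η * c_g) / c_o)) := by
  have hP : 0 < p_max + η * c_g := hco.trans hlt
  have hk₀ : 0 < c_o / (p_max + η * c_g) := div_pos hco hP
  have hk₁ : c_o / (p_max + η * c_g) < 1 := (div_lt_one hP).2 hlt
  have h_inv : (c_o / (p_max + η * c_g))⁻¹ = (p_max + η * c_g) / c_o := inv_div _ _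
  rw [← h_inv]
  exact ⟨fun lam hlam => add_div_add_mul_lt_inv (mul_pos hw hcm) hk₀ hk₁ hlam,
    tendsto_add_div_add_mul_atTop _ hk₀.ne'⟩

theorem Roff_bound_and_limit (w c_m c_o c_g η p_max : ℝ)
    (hw : 0 < w) (hcm : 0 < c_m) (hco : 0 < c_o) (hcg : 0 < c_g)
    (hη : 0 < η) (hp : 0 < p_max) (hlt : c_o < p_max + η * c_g) :
    (∀ lam : ℝ, 0 ≤ lam →
      (w * c_m + lam) / (w * c_m + (c_o / (p_max + η * c_g)) * lam)
        < (p_max + η * c_g) / c_o) ∧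
    Filter.Tendsto
      (fun lam : ℝ =>
        (w * c_m + lam) / (w * c_m + (c_o / (p_max + η * c_g)) * lam))
      Filter.atTop (nhds ((p_max + η * c_g) / c_o)) :=
  Roff_bound_and_limit_general w c_m c_o c_g η p_max hw hcm hco hlt
end

section
/- In a type-1 segment where the online algorithm delays turning on by a window [t, t+w] with cumulative differential cost Δ_t^{t+w} = λ, the online cost exceeds the offline cost by exactly λ, and if the offline cost on the window satisfies Cost_off ≥ ((p_max + η·c_g)/(p_max + η·c_g − c_o))·(w·c_m + (c_o/(p_max + η·c_g))·λ), then Cost_on/Cost_off ≤ (w·c_m + λ)/(w·c_m + (c_o/(p_max + η·c_g))·λ). -/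
theorem Roff_cost_ratio_bound (w c_m c_o c_g η p_max lam CostOn CostOff : ℝ)
    (hw : 0 < w) (hcm : 0 < c_m) (hco : 0 < c_o) (hcg : 0 < c_g)
    (hη : 0 < η) (hp : 0 < p_max) (hlt : c_o < p_max + η * c_g)
    (hlam : 0 ≤ lam)
    (hOn : CostOn = CostOff + lam)
    (hOff : ((p_max + η * c_g) / (p_max + η * c_g - c_o)) *
        (w * c_m + (c_o / (p_max + η * c_g)) * lam) ≤ CostOff) :
    CostOn / CostOff ≤
      (w * c_m + lam) / (w * c_m + (c_o / (p_max + η * c_g)) * lam) := by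
  set P := p_max + η * c_g with hP
  have hP0 : 0 < P := by positivity
  have hPc : 0 < P - c_o := by linarith
  have hD : 0 < w * c_m + c_o / P * lam := by positivity
  have hOff' : P / (P - c_o) * (w * c_m + c_o / P * lam) ≤ CostOff := hOff
  have hC0 : 0 < CostOff := lt_of_lt_of_le (by positivity) hOff'
  rw [hOn, div_le_div_iff₀ hC0 hD]
  have hkey : lam * (w * c_m + c_o / P * lam) ≤ lam * ((1 - c_o / P) * CostOff) := by
    apply mul_le_mul_of_nonneg_left _ hlam
    have h1 : (1 - c_o / P) * (P / (P - c_o)) = 1 := by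
      field_simp
    calc w * c_m + c_o / P * lam
        = (1 - c_o / P) * (P / (P - c_o) * (w * c_m + c_o / P * lam)) := by
          rw [← mul_assoc, h1, one_mul]
      _ ≤ (1 - c_o / P) * CostOff := by
          apply mul_le_mul_of_nonneg_left hOff'
          have : c_o / P < 1 := (div_lt_one hP0).mpr (by linarith)
          linarith
  nlinarith [hkey]
end
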